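/- In the free group Γ(r), the degree-≤2 part of the signature satisfies: if the abelianization of g vanishes (all exponent sums N̆_i(g) = 0), then the degree-2 part of log S(g) equals (1/2) ∑_{i<j} (N̆_{i,j}(g) − N̆_{j,i}(g)) [X_i, X_j], where N̆_{i,j}(g) is the signed count of ordered pairs of occurrences of γ_i before γ_j in g (counting inverse occurrences with sign −1). -/

import Mathlib

noncomputable def expMul {r : ℕ} (j : Fin r) (ε : ℝ) (T : List (Fin r) → ℝ) :
    List (Fin r) → ℝ :=
  fun w => ∑ k ∈ Finset.range (w.length + 1),
    (if w.take k = List.replicate k j then ε ^ k / (Nat.factorial k) else 0) * T (w.drop k)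

/-- The signature `S(g)` of an element of the free group on `r` generators. -/
noncomputable def sig {r : ℕ} (g : FreeGroup (Fin r)) : List (Fin r) → ℝ :=
  (FreeGroup.toWord g).foldr
    (fun p T => expMul p.1 (if p.2 then (1 : ℝ) else -1) T)
    (fun w => if w = [] then 1 else 0)

noncomputable def conv {r : ℕ} (f g : List (Fin r) → ℝ) : List (Fin r) → ℝ :=
  fun w => ∑ k ∈ Finset.range (w.length + 1), f (w.take k) * g (w.drop k)

noncomputable def convPow {r : ℕ} (f : List (Fin r) → ℝ) : ℕ → List (Fin r) → ℝ
  | 0 => fun w => if w = [] then 1 else 0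
  | n + 1 => conv f (convPow f n)

def sub1 {r : ℕ} (T : List (Fin r) → ℝ) : List (Fin r) → ℝ :=
  fun w => if w = [] then T [] - 1 else T w

noncomputable def logSeries {r : ℕ} (T : List (Fin r) → ℝ) : List (Fin r) → ℝ :=
  fun w => ∑ n ∈ Finset.Icc 1 w.length, ((-1 : ℝ) ^ (n + 1) / n) * convPow (sub1 T) n w

/-- The sign `ε = ±1` of a letter of a word in the free group. -/
def lsgn (b : Bool) : ℤ := if b then 1 else -1

/-- `N̆_i(g)`: the exponent sum of the generator `γ_i` in (the reduced word of) `g`. -/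
def N1 {r : ℕ} (g : FreeGroup (Fin r)) (i : Fin r) : ℤ :=
  ((FreeGroup.toWord g).map fun q => if q.1 = i then lsgn q.2 else 0).sum

/-- `N̆_{i,j}(g) = ∑ ε ε'` over all pairs of positions `k < l` in the reduced word of
`g` where position `k` carries `γ_i^ε` and position `l` carries `γ_j^{ε'}`. -/
def N2 {r : ℕ} (g : FreeGroup (Fin r)) (i j : Fin r) : ℤ :=
  let w := FreeGroup.toWord g
  ∑ k : Fin w.length, ∑ l : Fin w.length,
    if (k : ℕ) < (l : ℕ) then
      (if (w.get k).1 = i then lsgn (w.get k).2 else 0) *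
      (if (w.get l).1 = j then lsgn (w.get l).2 else 0)
    else 0

namespace LogSigAux

def m1 {r : ℕ} (L : List (Fin r × Bool)) (a : Fin r) : ℤ :=
  (L.map fun q => if q.1 = a then lsgn q.2 else 0).sum

def m2 {r : ℕ} : List (Fin r × Bool) → Fin r → Fin r → ℤ
  | [], _, _ => 0
  | q :: L, a, b => (if q.1 = a then lsgn q.2 else 0) * m1 L b + m2 L a b

lemma m1_cons {r : ℕ} (q : Fin r × Bool) (L : List (Fin r × Bool)) (a : Fin r) :
    m1 (q :: L) a = (if q.1 = a then lsgn q.2 else 0) + m1 L a := by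
  simp [m1]

lemma lsgn_sq (b : Bool) : lsgn b * lsgn b = 1 := by cases b <;> simp [lsgn]

lemma m1_fin_sum {r : ℕ} (L : List (Fin r × Bool)) (a : Fin r) :
    (∑ l : Fin L.length, (if (L.get l).1 = a then lsgn (L.get l).2 else 0)) = m1 L a := by
  induction L with
  | nil => simp [m1]
  | cons q L ih => rw [m1_cons, ← ih]; simp [Fin.sum_univ_succ]; split_ifs with h <;> simp [h]

lemma sum2_eq {r : ℕ} (w : List (Fin r × Bool)) (a b : Fin r) :
    (∑ k : Fin w.length, ∑ l : Fin w.length,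
      if (k : ℕ) < (l : ℕ) then
        (if (w.get k).1 = a then lsgn (w.get k).2 else 0) *
        (if (w.get l).1 = b then lsgn (w.get l).2 else 0)
      else 0) = m2 w a b := by
  induction w with
  | nil => simp [m2]
  | cons q L ih =>
    simp only [Fin.sum_univ_succ, List.length_cons, List.get_eq_getElem, Fin.val_succ,
      List.getElem_cons_succ, List.getElem_cons_zero]
    simp only [Fin.val_zero, Nat.lt_irrefl, if_false, Nat.succ_pos,
      Nat.zero_lt_succ, if_true, Nat.succ_lt_succ_iff, Nat.not_lt_zero]
    have hm1 := m1_fin_sum L b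
    simp only [List.get_eq_getElem] at ih hm1
    rw [← Finset.mul_sum, hm1]
    simp only [zero_add]
    rw [ih]
    simp [m2]
    split_ifs with h <;> simp [h]

lemma m2_diag {r : ℕ} (L : List (Fin r × Bool)) (a : Fin r) :
    2 * m2 L a a + ((L.countP fun q => q.1 = a) : ℤ) = m1 L a * m1 L a := by
  induction L with
  | nil => simp [m2, m1]
  | cons q L ih =>
    obtain ⟨j, s⟩ := q
    rw [m1_cons]
    simp only [m2, List.countP_cons]
    by_cases h : j = a
    · subst h
      simp only [if_pos rfl]
      push_cast
      simp [decide_eq_true_eq]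
      nlinarith [lsgn_sq s, ih]
    · simp only [if_neg h]
      push_cast
      simp [h]
      linarith [ih]

lemma m2_off {r : ℕ} (L : List (Fin r × Bool)) (a b : Fin r) (hab : a ≠ b) :
    m2 L a b + m2 L b a = m1 L a * m1 L b := by
  induction L with
  | nil => simp [m2, m1]
  | cons q L ih =>
    obtain ⟨j, s⟩ := q
    rw [m1_cons, m1_cons]
    simp only [m2]
    by_cases ha : j = a
    · subst ha
      rw [if_pos rfl, if_neg hab]
      nlinarith [ih]
    · by_cases hb : j = b
      · subst hb
        rw [if_neg ha, if_pos rfl]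
        nlinarith [ih]
      · rw [if_neg ha, if_neg hb]
        nlinarith [ih]

lemma expMul_nil {r : ℕ} (j : Fin r) (ε : ℝ) (T : List (Fin r) → ℝ) :
    expMul j ε T [] = T [] := by
  simp [expMul]

lemma expMul_one {r : ℕ} (j : Fin r) (ε : ℝ) (T : List (Fin r) → ℝ) (a : Fin r) :
    expMul j ε T [a] = T [a] + (if a = j then ε * T [] else 0) := by
  simp only [expMul, List.length_cons, List.length_nil]
  rw [Finset.sum_range_succ, Finset.sum_range_succ, Finset.sum_range_zero]
  simp [List.replicate]

lemma expMul_two {r : ℕ} (j : Fin r) (ε : ℝ) (T : List (Fin r) → ℝ) (a b : Fin r) :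
    expMul j ε T [a, b] = T [a, b] + (if a = j then ε * T [b] else 0)
      + (if a = j ∧ b = j then ε ^ 2 / 2 * T [] else 0) := by
  simp only [expMul, List.length_cons, List.length_nil]
  rw [Finset.sum_range_succ, Finset.sum_range_succ, Finset.sum_range_succ, Finset.sum_range_zero]
  simp [List.replicate, Nat.factorial]

noncomputable def F {r : ℕ} (L : List (Fin r × Bool)) : List (Fin r) → ℝ :=
  L.foldr (fun p T => expMul p.1 (if p.2 then (1 : ℝ) else -1) T)
    (fun w => if w = [] then 1 else 0)

lemma F_cons {r : ℕ} (q : Fin r × Bool) (L : List (Fin r × Bool)) :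
    F (q :: L) = expMul q.1 (if q.2 then (1 : ℝ) else -1) (F L) := rfl

lemma F_nil_word {r : ℕ} (L : List (Fin r × Bool)) : F L [] = 1 := by
  induction L with
  | nil => simp [F]
  | cons q L ih => rw [F_cons, expMul_nil, ih]

lemma F_one {r : ℕ} (L : List (Fin r × Bool)) (a : Fin r) :
    F L [a] = ((m1 L a : ℤ) : ℝ) := by
  induction L with
  | nil => simp [F, m1]
  | cons q L ih =>
    obtain ⟨j, s⟩ := q
    rw [F_cons, expMul_one, ih, F_nil_word, m1_cons]
    push_cast
    by_cases h : j = a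
    · subst h; cases s <;> simp [lsgn] <;> ring
    · rw [if_neg h, if_neg (fun hh => h hh.symm)]; ring

lemma F_two {r : ℕ} (L : List (Fin r × Bool)) (a b : Fin r) :
    F L [a, b] = ((m2 L a b : ℤ) : ℝ) +
      (if a = b then ((L.countP fun q => q.1 = a) : ℝ) / 2 else 0) := by
  induction L with
  | nil => simp [F, m2]
  | cons q L ih =>
    obtain ⟨j, s⟩ := q
    rw [F_cons, expMul_two, ih, F_one, F_nil_word]
    by_cases hab : a = b
    · subst hab
      by_cases h : j = a
      · subst h
        cases s <;> simp [m2, List.countP_cons, lsgn] <;> push_cast <;> ring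
      · have h' : ¬ a = j := fun hh => h hh.symm
        simp only [m2, List.countP_cons, if_neg h, if_neg h', if_pos rfl,
          if_neg (show ¬(a = j ∧ a = j) from fun hh => h' hh.1), decide_eq_true_eq]
        push_cast [h]
        ring
    · have hF : ¬(a = j ∧ b = j) := fun hh => hab (hh.1.trans hh.2.symm)
      by_cases h : j = a
      · subst h
        have hbj : ¬ b = j := fun hh => hab hh.symm
        cases s <;>
          simp [m2, if_pos rfl, if_neg hab, hbj, lsgn] <;>
          push_cast <;> ring
      · have h' : ¬ a = j := fun hh => h hh.symm
        simp only [m2, if_neg h, if_neg h', if_neg hab, if_neg hF]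
        push_cast
        ring

lemma logSeries_two {r : ℕ} (T : List (Fin r) → ℝ) (hT : T [] = 1) (a b : Fin r) :
    logSeries T [a, b] = T [a, b] - T [a] * T [b] / 2 := by
  have h0 : sub1 T [] = 0 := by simp [sub1, hT]
  simp only [logSeries, List.length_cons, List.length_nil, Nat.zero_add]
  rw [show Finset.Icc 1 (1+1) = {1, 2} by decide]
  rw [Finset.sum_insert (by decide), Finset.sum_singleton]
  simp [convPow, conv, Finset.sum_range_succ, h0, sub1, hT]
  ring

end LogSigAux

open LogSigAux in
/-- If all exponent sums `N̆_i(g)` vanish, the degree-2 part of `log S(g)` equals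
`(1/2) ∑_{i<j} (N̆_{i,j}(g) − N̆_{j,i}(g)) [X_i, X_j]`; i.e. its coefficient on the word
`X_a X_b` is `0` for `a = b` and `(N̆_{a,b}(g) − N̆_{b,a}(g))/2` otherwise. -/
theorem logSig_degree_two {r : ℕ} (g : FreeGroup (Fin r))
    (h1 : ∀ i : Fin r, N1 g i = 0) (a b : Fin r) :
    logSeries (sig g) [a, b] =
      if a = b then 0 else ((N2 g a b - N2 g b a : ℤ) : ℝ) / 2 := by
  set w := FreeGroup.toWord g with hw
  have hsig : sig g = F w := rfl
  have hm1 : ∀ i, m1 w i = 0 := fun i => h1 i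
  have hT : sig g [] = 1 := by rw [hsig]; exact F_nil_word _
  rw [logSeries_two _ hT, hsig, F_one, F_one, hm1 a, hm1 b, F_two]
  have hN2a : N2 g a b = m2 w a b := sum2_eq w a b
  have hN2b : N2 g b a = m2 w b a := sum2_eq w b a
  by_cases hab : a = b
  · subst hab
    rw [if_pos rfl, if_pos rfl]
    have hd := m2_diag w a
    rw [hm1 a] at hd
    have key : ((m2 w a a : ℤ) : ℝ) + ((w.countP fun q => q.1 = a : ℕ) : ℝ) / 2 = 0 := by
      have := congrArg (fun z : ℤ => (z : ℝ)) hd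
      push_cast at this ⊢
      linarith
    rw [key]
    norm_num
  · rw [if_neg hab, if_neg hab, hN2a, hN2b]
    have hoff := m2_off w a b hab
    rw [hm1 a] at hoff
    have hba : m2 w b a = - m2 w a b := by linarith
    rw [hba]
    push_cast
    ring
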